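/- arXiv:0803.0811 — 2 statements merged into one kernel-verified Lean document; each statement's English description precedes it below -/
import Mathlib

section
/- Let x be supported on T with |T| ≤ K, y = Φx, and let T̃ ⊇ a set of indices with |T̃| ≤ 2K such that Φ_{T̃}^* Φ_{T̃} is invertible. Let x_p = (Φ_{T̃}^* Φ_{T̃})^{-1} Φ_{T̃}^* y be the projection coefficient vector and ε = x_p − x_{T̃} the smear. Then ‖ε‖₂ ≤ (δ_{3K}/(1 − δ_{3K})) ‖x_{T−T̃}‖₂. -/
open scoped BigOperators

/-- Squared-sum Euclidean norm of a finite vector. -/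
noncomputable def l2norm {ι : Type*} [Fintype ι] (v : ι → ℝ) : ℝ :=
  Real.sqrt (∑ i, v i ^ 2)

/-- The ℓ₁ norm of a finite vector. -/
noncomputable def l1norm {ι : Type*} [Fintype ι] (v : ι → ℝ) : ℝ :=
  ∑ i, |v i|

/-- `Φ_I q`: the product of the column submatrix `Φ_I` with a coefficient vector `q`. -/
noncomputable def colMul {m N : ℕ} (Φ : Matrix (Fin m) (Fin N) ℝ) (I : Finset (Fin N))
    (q : I → ℝ) : Fin m → ℝ :=
  fun r => ∑ i : I, Φ r i.1 * q i

/-- `Φ_I^* y`: the transpose of the column submatrix applied to `y`. -/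
noncomputable def colTMul {m N : ℕ} (Φ : Matrix (Fin m) (Fin N) ℝ) (I : Finset (Fin N))
    (y : Fin m → ℝ) : I → ℝ :=
  fun i => ∑ r, Φ r i.1 * y r

/-- The Gram matrix `Φ_I^* Φ_I`. -/
noncomputable def gram {m N : ℕ} (Φ : Matrix (Fin m) (Fin N) ℝ) (I : Finset (Fin N)) :
    Matrix I I ℝ :=
  fun i j => ∑ r, Φ r i.1 * Φ r j.1

/-- `Φ` satisfies the restricted isometry property at sparsity `K` with parameter `δ`. -/
def IsRIP {m N : ℕ} (Φ : Matrix (Fin m) (Fin N) ℝ) (K : ℕ) (δ : ℝ) : Prop :=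
  ∀ I : Finset (Fin N), I.card ≤ K → ∀ q : I → ℝ,
    (1 - δ) * ∑ i, q i ^ 2 ≤ ∑ r, (colMul Φ I q r) ^ 2 ∧
      ∑ r, (colMul Φ I q r) ^ 2 ≤ (1 + δ) * ∑ i, q i ^ 2

/-- The RIP constant `δ_K`: the infimum of all admissible RIP parameters. -/
noncomputable def ripConst {m N : ℕ} (Φ : Matrix (Fin m) (Fin N) ℝ) (K : ℕ) : ℝ :=
  sInf {δ : ℝ | 0 ≤ δ ∧ IsRIP Φ K δ}

/-- Projection coefficients `(Φ_I^* Φ_I)⁻¹ Φ_I^* y`. -/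
noncomputable def projCoeff {m N : ℕ} (Φ : Matrix (Fin m) (Fin N) ℝ) (I : Finset (Fin N))
    (y : Fin m → ℝ) : I → ℝ :=
  (gram Φ I)⁻¹.mulVec (colTMul Φ I y)

/-- Orthogonal projection of `y` onto the column span of `Φ_I`. -/
noncomputable def projVec {m N : ℕ} (Φ : Matrix (Fin m) (Fin N) ℝ) (I : Finset (Fin N))
    (y : Fin m → ℝ) : Fin m → ℝ :=
  colMul Φ I (projCoeff Φ I y)

noncomputable def ext0 {N : ℕ} (I : Finset (Fin N)) (f : I → ℝ) : Fin N → ℝ :=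
  fun j => if h : j ∈ I then f ⟨j, h⟩ else 0

lemma ext0_notMem {N : ℕ} (I : Finset (Fin N)) (f : I → ℝ) {j : Fin N} (hj : j ∉ I) :
    ext0 I f j = 0 := dif_neg hj

lemma sum_ext0 {N : ℕ} (I : Finset (Fin N)) (f : I → ℝ) (F : Fin N → ℝ → ℝ)
    (hF : ∀ j, F j 0 = 0) :
    ∑ j, F j (ext0 I f j) = ∑ i : I, F i.1 (f i) := by
  calc ∑ j, F j (ext0 I f j) = ∑ j ∈ I, F j (ext0 I f j) :=
        (Finset.sum_subset (Finset.subset_univ I)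
          (fun j _ hj => by rw [ext0_notMem I f hj, hF])).symm
    _ = ∑ i : I, F i.1 (ext0 I f i.1) := (Finset.sum_coe_sort I _).symm
    _ = ∑ i : I, F i.1 (f i) := Finset.sum_congr rfl (fun i _ => by
        simp [ext0, i.2])

lemma colMul_ext0 {m N : ℕ} (Φ : Matrix (Fin m) (Fin N) ℝ) (I : Finset (Fin N))
    (f : I → ℝ) (r : Fin m) :
    colMul Φ I f r = ∑ j, Φ r j * ext0 I f j :=
  (sum_ext0 I f (fun j t => Φ r j * t) (by simp)).symm

lemma sum_sq_ext0 {N : ℕ} (I : Finset (Fin N)) (f : I → ℝ) :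
    ∑ j, (ext0 I f j) ^ 2 = ∑ i : I, f i ^ 2 :=
  sum_ext0 I f (fun _ t => t ^ 2) (by simp)

lemma exists_isRIP {m N : ℕ} (Φ : Matrix (Fin m) (Fin N) ℝ) (K : ℕ) :
    ∃ δ : ℝ, 0 ≤ δ ∧ IsRIP Φ K δ := by
  refine ⟨1 + ∑ r, ∑ j, (Φ r j) ^ 2, ?_, ?_⟩
  · positivity
  · intro I hI q
    have hQ : (0:ℝ) ≤ ∑ i, q i ^ 2 := Finset.sum_nonneg fun _ _ => sq_nonneg _
    have hC : (0:ℝ) ≤ ∑ r, ∑ j, (Φ r j) ^ 2 :=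
      Finset.sum_nonneg fun _ _ => Finset.sum_nonneg fun _ _ => sq_nonneg _
    constructor
    · have : (0:ℝ) ≤ ∑ r, (colMul Φ I q r) ^ 2 :=
        Finset.sum_nonneg fun _ _ => sq_nonneg _
      nlinarith
    · have key : ∀ r, (colMul Φ I q r) ^ 2 ≤ (∑ j, (Φ r j) ^ 2) * ∑ i, q i ^ 2 := by
        intro r
        have cs := Finset.sum_mul_sq_le_sq_mul_sq Finset.univ
          (fun i : I => Φ r i.1) q
        have hle : ∑ i : I, (Φ r i.1) ^ 2 ≤ ∑ j, (Φ r j) ^ 2 := by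
          rw [Finset.sum_coe_sort I (fun j => (Φ r j) ^ 2)]
          exact Finset.sum_le_sum_of_subset_of_nonneg (Finset.subset_univ I)
            (fun _ _ _ => sq_nonneg _)
        calc (colMul Φ I q r) ^ 2 ≤ (∑ i : I, (Φ r i.1) ^ 2) * ∑ i, q i ^ 2 := cs
          _ ≤ (∑ j, (Φ r j) ^ 2) * ∑ i, q i ^ 2 := by
              exact mul_le_mul_of_nonneg_right hle hQ
      calc ∑ r, (colMul Φ I q r) ^ 2
          ≤ ∑ r, (∑ j, (Φ r j) ^ 2) * ∑ i, q i ^ 2 := Finset.sum_le_sum fun r _ => key r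
        _ = (∑ r, ∑ j, (Φ r j) ^ 2) * ∑ i, q i ^ 2 := by rw [Finset.sum_mul]
        _ ≤ (1 + (1 + ∑ r, ∑ j, (Φ r j) ^ 2)) * ∑ i, q i ^ 2 := by nlinarith

lemma ripConst_nonneg {m N : ℕ} (Φ : Matrix (Fin m) (Fin N) ℝ) (K : ℕ) :
    0 ≤ ripConst Φ K := by
  obtain ⟨δ, hδ⟩ := exists_isRIP Φ K
  exact le_csInf ⟨δ, hδ⟩ fun b hb => hb.1

lemma isRIP_ripConst {m N : ℕ} (Φ : Matrix (Fin m) (Fin N) ℝ) (K : ℕ) :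
    IsRIP Φ K (ripConst Φ K) := by
  set S : Set ℝ := {δ : ℝ | 0 ≤ δ ∧ IsRIP Φ K δ} with hS
  have hne : S.Nonempty := exists_isRIP Φ K
  have hbdd : BddBelow S := ⟨0, fun b hb => hb.1⟩
  intro I hI q
  have hQ : (0:ℝ) ≤ ∑ i, q i ^ 2 := Finset.sum_nonneg fun _ _ => sq_nonneg _
  have key : ∀ ε : ℝ, 0 < ε → ∃ δ' ∈ S, δ' < ripConst Φ K + ε := by
    intro ε hε
    have := csInf_lt_iff hbdd hne (a := ripConst Φ K + ε)
    exact (this.mp (by unfold ripConst; rw [← hS]; linarith))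
  constructor
  · rcases eq_or_lt_of_le hQ with hQ0 | hQ0
    · have : (0:ℝ) ≤ ∑ r, (colMul Φ I q r) ^ 2 :=
        Finset.sum_nonneg fun _ _ => sq_nonneg _
      rw [← hQ0, mul_zero]; exact this
    · refine le_of_forall_pos_le_add fun ε hε => ?_
      obtain ⟨δ', ⟨_, hrip⟩, hlt⟩ := key (ε / (∑ i, q i ^ 2)) (by positivity)
      have h1 := (hrip I hI q).1
      have : (ripConst Φ K + ε / (∑ i, q i ^ 2) - δ') * ∑ i, q i ^ 2 ≥ 0 :=
        mul_nonneg (by linarith) hQ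
      have hdiv : (ε / (∑ i, q i ^ 2)) * ∑ i, q i ^ 2 = ε :=
        div_mul_cancel₀ ε (ne_of_gt hQ0)
      nlinarith
  · rcases eq_or_lt_of_le hQ with hQ0 | hQ0
    · obtain ⟨δ', ⟨_, hrip⟩, _⟩ := key 1 one_pos
      have h2 := (hrip I hI q).2
      nlinarith
    · refine le_of_forall_pos_le_add fun ε hε => ?_
      obtain ⟨δ', ⟨_, hrip⟩, hlt⟩ := key (ε / (∑ i, q i ^ 2)) (by positivity)
      have h2 := (hrip I hI q).2
      have hdiv : (ε / (∑ i, q i ^ 2)) * ∑ i, q i ^ 2 = ε :=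
        div_mul_cancel₀ ε (ne_of_gt hQ0)
      nlinarith

lemma rip_full {m N : ℕ} (Φ : Matrix (Fin m) (Fin N) ℝ) {K : ℕ} {δ : ℝ}
    (h : IsRIP Φ K δ) (U : Finset (Fin N)) (hU : U.card ≤ K) (g : Fin N → ℝ)
    (hgs : ∀ j, j ∉ U → g j = 0) :
    (1 - δ) * ∑ j, g j ^ 2 ≤ ∑ r, (∑ j, Φ r j * g j) ^ 2 ∧
      ∑ r, (∑ j, Φ r j * g j) ^ 2 ≤ (1 + δ) * ∑ j, g j ^ 2 := by
  have hext : ext0 U (fun i => g i.1) = g := by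
    funext j
    by_cases hj : j ∈ U
    · simp [ext0, hj]
    · simp [ext0, hj, hgs j hj]
  have hsq : ∑ i : U, g i.1 ^ 2 = ∑ j, g j ^ 2 := by
    rw [← sum_sq_ext0 U (fun i => g i.1), hext]
  have hcol : ∀ r, colMul Φ U (fun i => g i.1) r = ∑ j, Φ r j * g j := by
    intro r; rw [colMul_ext0, hext]
  have := h U hU (fun i => g i.1)
  simp only [hcol, hsq] at this
  exact this

lemma colsum_mul {m N : ℕ} (Φ : Matrix (Fin m) (Fin N) ℝ) (e : Fin N → ℝ) (w : Fin m → ℝ) :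
    ∑ r, (∑ j, Φ r j * e j) * w r = ∑ j, e j * (∑ r, Φ r j * w r) := by
  calc ∑ r, (∑ j, Φ r j * e j) * w r = ∑ r, ∑ j, Φ r j * e j * w r := by
        simp_rw [Finset.sum_mul]
    _ = ∑ j, ∑ r, Φ r j * e j * w r := Finset.sum_comm
    _ = ∑ j, e j * (∑ r, Φ r j * w r) := by
        simp_rw [Finset.mul_sum]
        exact Finset.sum_congr rfl fun j _ => Finset.sum_congr rfl fun r _ => by ring

lemma mul_colsum {m N : ℕ} (Φ : Matrix (Fin m) (Fin N) ℝ) (c : Fin N → ℝ) (i : Fin N) :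
    ∑ r, Φ r i * (∑ j, Φ r j * c j) = ∑ j, (∑ r, Φ r i * Φ r j) * c j := by
  calc ∑ r, Φ r i * (∑ j, Φ r j * c j) = ∑ r, ∑ j, Φ r i * Φ r j * c j := by
        simp_rw [Finset.mul_sum]
        exact Finset.sum_congr rfl fun r _ => Finset.sum_congr rfl fun j _ => by ring
    _ = ∑ j, ∑ r, Φ r i * Φ r j * c j := Finset.sum_comm
    _ = ∑ j, (∑ r, Φ r i * Φ r j) * c j := by simp_rw [Finset.sum_mul]

theorem smear_bound {m N : ℕ} (Φ : Matrix (Fin m) (Fin N) ℝ) (K : ℕ)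
    (x : Fin N → ℝ) (T Tt : Finset (Fin N))
    (hsupp : ∀ i, i ∉ T → x i = 0) (hT : T.card ≤ K) (hTt : Tt.card ≤ 2 * K)
    (hg : IsUnit (gram Φ Tt))
    (hδ : ripConst Φ (3 * K) < 1) :
    l2norm (fun i : Tt => projCoeff Φ Tt (Φ.mulVec x) i - x i.1) ≤
      ripConst Φ (3 * K) / (1 - ripConst Φ (3 * K)) *
        l2norm (fun i : (T \ Tt : Finset (Fin N)) => x i.1) := by
  classical
  set c := ripConst Φ (3 * K) with hc
  have hc0 : 0 ≤ c := ripConst_nonneg Φ (3 * K)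
  have hrip : IsRIP Φ (3 * K) c := isRIP_ripConst Φ (3 * K)
  set εsub : Tt → ℝ := fun i => projCoeff Φ Tt (Φ.mulVec x) i - x i.1 with hεsub
  set ea : Fin N → ℝ := ext0 Tt εsub with hea
  set eb : Fin N → ℝ := ext0 (T \ Tt) (fun i => x i.1) with heb
  set u : Fin m → ℝ := fun r => ∑ j, Φ r j * ea j with hu
  set v : Fin m → ℝ := fun r => ∑ j, Φ r j * eb j with hv
  -- gram identity
  have hdet : IsUnit (gram Φ Tt).det := (Matrix.isUnit_iff_isUnit_det _).1 hg
  have hinv : gram Φ Tt * (gram Φ Tt)⁻¹ = 1 := Matrix.mul_nonsing_inv _ hdet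
  have hproj : (gram Φ Tt).mulVec (projCoeff Φ Tt (Φ.mulVec x)) =
      colTMul Φ Tt (Φ.mulVec x) := by
    unfold projCoeff
    rw [Matrix.mulVec_mulVec, hinv, Matrix.one_mulVec]
  have hsubU : ∀ j, j ∈ T → j ∈ Tt ∪ (T \ Tt) := by
    intro j hj
    by_cases h : j ∈ Tt
    · exact Finset.mem_union_left _ h
    · exact Finset.mem_union_right _ (Finset.mem_sdiff.2 ⟨hj, h⟩)
  have hGe : ∀ i : Tt, ∑ j : Tt, gram Φ Tt i j * εsub j =
      ∑ j ∈ T \ Tt, (∑ r, Φ r i.1 * Φ r j) * x j := by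
    intro i
    have hm : ∑ j : Tt, gram Φ Tt i j * projCoeff Φ Tt (Φ.mulVec x) j =
        colTMul Φ Tt (Φ.mulVec x) i := by
      have := congrFun hproj i
      simpa [Matrix.mulVec, dotProduct] using this
    have e1 : ∑ j : Tt, gram Φ Tt i j * εsub j =
        colTMul Φ Tt (Φ.mulVec x) i - ∑ j : Tt, gram Φ Tt i j * x j.1 := by
      rw [← hm, ← Finset.sum_sub_distrib]
      exact Finset.sum_congr rfl fun j _ => by simp only [hεsub]; ring
    have swap : colTMul Φ Tt (Φ.mulVec x) i = ∑ j, (∑ r, Φ r i.1 * Φ r j) * x j := by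
      unfold colTMul
      simp only [Matrix.mulVec, dotProduct]
      exact mul_colsum Φ x i.1
    have hrestrict : ∑ j, (∑ r, Φ r i.1 * Φ r j) * x j =
        ∑ j ∈ Tt ∪ (T \ Tt), (∑ r, Φ r i.1 * Φ r j) * x j :=
      (Finset.sum_subset (Finset.subset_univ _) (fun j _ hj => by
        rw [hsupp j (fun hjT => hj (hsubU j hjT)), mul_zero])).symm
    have e2 : colTMul Φ Tt (Φ.mulVec x) i =
        (∑ j : Tt, gram Φ Tt i j * x j.1) +
          ∑ j ∈ T \ Tt, (∑ r, Φ r i.1 * Φ r j) * x j := by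
      rw [swap, hrestrict, Finset.sum_union Finset.disjoint_sdiff]
      congr 1
      rw [← Finset.sum_coe_sort Tt (fun j => (∑ r, Φ r i.1 * Φ r j) * x j)]
      rfl
    rw [e1, e2]; ring
  -- cross identities
  have hΦv : ∀ i : Tt, ∑ r, Φ r i.1 * v r =
      ∑ j ∈ T \ Tt, (∑ r, Φ r i.1 * Φ r j) * x j := by
    intro i
    simp only [hv]
    rw [mul_colsum Φ eb i.1, heb,
      sum_ext0 (T \ Tt) _ (fun j t => (∑ r, Φ r i.1 * Φ r j) * t) (by simp),
      Finset.sum_coe_sort (T \ Tt) (fun j => (∑ r, Φ r i.1 * Φ r j) * x j)]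
  have hΦu : ∀ i : Tt, ∑ r, Φ r i.1 * u r =
      ∑ j ∈ T \ Tt, (∑ r, Φ r i.1 * Φ r j) * x j := by
    intro i
    simp only [hu]
    rw [mul_colsum Φ ea i.1, hea,
      sum_ext0 Tt εsub (fun j t => (∑ r, Φ r i.1 * Φ r j) * t) (by simp)]
    exact hGe i
  have hA : ∑ r, u r * v r = ∑ r, u r ^ 2 := by
    have h1 : ∑ r, u r * v r = ∑ i : Tt, εsub i * (∑ r, Φ r i.1 * v r) := by
      simp only [hu]
      rw [colsum_mul Φ ea v, hea,
        sum_ext0 Tt εsub (fun j t => t * (∑ r, Φ r j * v r)) (by simp)]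
    have h2 : ∑ r, u r ^ 2 = ∑ i : Tt, εsub i * (∑ r, Φ r i.1 * u r) := by
      have : ∑ r, u r ^ 2 = ∑ r, u r * u r := by
        exact Finset.sum_congr rfl fun r _ => sq (u r) ▸ by ring
      rw [this]
      conv_lhs => simp only [hu]
      rw [colsum_mul Φ ea u, hea,
        sum_ext0 Tt εsub (fun j t => t * (∑ r, Φ r j * u r)) (by simp)]
    rw [h1, h2]
    exact Finset.sum_congr rfl fun i _ => by rw [hΦu i, hΦv i]
  -- norms
  set S : ℝ := Real.sqrt (∑ j, ea j ^ 2) with hSdef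
  set B : ℝ := Real.sqrt (∑ j, eb j ^ 2) with hBdef
  have hSa2 : (0:ℝ) ≤ ∑ j, ea j ^ 2 := Finset.sum_nonneg fun _ _ => sq_nonneg _
  have hSb2 : (0:ℝ) ≤ ∑ j, eb j ^ 2 := Finset.sum_nonneg fun _ _ => sq_nonneg _
  have hS2 : S ^ 2 = ∑ j, ea j ^ 2 := Real.sq_sqrt hSa2
  have hB2 : B ^ 2 = ∑ j, eb j ^ 2 := Real.sq_sqrt hSb2
  have hS0 : 0 ≤ S := Real.sqrt_nonneg _
  have hB0 : 0 ≤ B := Real.sqrt_nonneg _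
  have hL : l2norm (fun i : Tt => projCoeff Φ Tt (Φ.mulVec x) i - x i.1) = S := by
    rw [hSdef, hea, sum_sq_ext0 Tt εsub]
    rfl
  have hR : l2norm (fun i : (T \ Tt : Finset (Fin N)) => x i.1) = B := by
    rw [hBdef, heb, sum_sq_ext0 (T \ Tt) (fun i => x i.1)]
    rfl
  rw [hL, hR]
  -- cardinalities
  have hcardTt : Tt.card ≤ 3 * K := by omega
  have hcardU : (Tt ∪ (T \ Tt)).card ≤ 3 * K := by
    have h1 := Finset.card_union_le Tt (T \ Tt)
    have h2 : (T \ Tt).card ≤ T.card := Finset.card_le_card (Finset.sdiff_subset)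
    omega
  have hsuppa : ∀ j, j ∉ Tt → ea j = 0 := fun j hj => ext0_notMem _ _ hj
  have hsuppb : ∀ j, j ∉ T \ Tt → eb j = 0 := fun j hj => ext0_notMem _ _ hj
  -- RIP lower bound on Tt
  have hlow : (1 - c) * ∑ j, ea j ^ 2 ≤ ∑ r, u r ^ 2 := by
    have := (rip_full Φ hrip Tt hcardTt ea hsuppa).1
    simpa only [hu] using this
  -- cross bound
  have hcross : B * S * (∑ r, u r * v r) ≤ c * (S ^ 2 * B ^ 2) := by
    have horth : ∀ j, ea j * eb j = 0 := by
      intro j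
      by_cases hj : j ∈ Tt
      · rw [hsuppb j (fun h => (Finset.mem_sdiff.1 h).2 hj), mul_zero]
      · rw [hsuppa j hj, zero_mul]
    have horthsum : ∑ j, ea j * eb j = 0 := Finset.sum_eq_zero fun j _ => horth j
    have hsupg : ∀ (a b : ℝ) (j : Fin N), j ∉ Tt ∪ (T \ Tt) →
        a * ea j + b * eb j = 0 := by
      intro a b j hj
      rw [hsuppa j (fun h => hj (Finset.mem_union_left _ h)),
        hsuppb j (fun h => hj (Finset.mem_union_right _ h)), mul_zero, mul_zero, add_zero]
    have hcol : ∀ (a b : ℝ) (r : Fin m),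
        ∑ j, Φ r j * (a * ea j + b * eb j) = a * u r + b * v r := by
      intro a b r
      simp only [hu, hv]
      rw [Finset.mul_sum, Finset.mul_sum, ← Finset.sum_add_distrib]
      exact Finset.sum_congr rfl fun j _ => by ring
    have hsumg : ∀ (a b : ℝ),
        ∑ j, (a * ea j + b * eb j) ^ 2 =
          a ^ 2 * ∑ j, ea j ^ 2 + b ^ 2 * ∑ j, eb j ^ 2 := by
      intro a b
      have : ∀ j : Fin N, (a * ea j + b * eb j) ^ 2 =
          a ^ 2 * ea j ^ 2 + b ^ 2 * eb j ^ 2 + 2 * a * b * (ea j * eb j) := by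
        intro j; ring
      simp_rw [this]
      rw [Finset.sum_add_distrib, Finset.sum_add_distrib, ← Finset.mul_sum,
        ← Finset.mul_sum, ← Finset.mul_sum, horthsum, mul_zero, add_zero]
    have hplus := (rip_full Φ hrip (Tt ∪ (T \ Tt)) hcardU
      (fun j => B * ea j + S * eb j) (hsupg B S)).2
    have hminus := (rip_full Φ hrip (Tt ∪ (T \ Tt)) hcardU
      (fun j => B * ea j + (-S) * eb j) (hsupg B (-S))).1
    simp only [hcol, hsumg] at hplus hminus
    have hexp : ∑ r, (B * u r + S * v r) ^ 2 - ∑ r, (B * u r + (-S) * v r) ^ 2 =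
        4 * B * S * ∑ r, u r * v r := by
      rw [← Finset.sum_sub_distrib, Finset.mul_sum]
      exact Finset.sum_congr rfl fun r _ => by ring
    have hSB : B ^ 2 * ∑ j, ea j ^ 2 + S ^ 2 * ∑ j, eb j ^ 2 = 2 * (S ^ 2 * B ^ 2) := by
      rw [← hS2, ← hB2]; ring
    have hSB' : B ^ 2 * ∑ j, ea j ^ 2 + (-S) ^ 2 * ∑ j, eb j ^ 2 = 2 * (S ^ 2 * B ^ 2) := by
      rw [← hS2, ← hB2]; ring
    rw [hSB] at hplus
    rw [hSB'] at hminus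
    nlinarith [hplus, hminus, hexp]
  -- conclude
  by_cases hS : S = 0
  · rw [hS]
    exact mul_nonneg (div_nonneg hc0 (by linarith)) hB0
  · have hSpos : 0 < S := lt_of_le_of_ne hS0 (Ne.symm hS)
    have hlow2 : (1 - c) * S ^ 2 ≤ ∑ r, u r * v r := by
      rw [hA, hS2]; exact hlow
    by_cases hB : B = 0
    · exfalso
      have heb0 : ∀ j, eb j = 0 := by
        intro j
        have hb2 : ∑ j, eb j ^ 2 = 0 := by rw [← hB2, hB]; ring
        have := (Finset.sum_eq_zero_iff_of_nonneg
          (fun j _ => sq_nonneg (eb j))).1 hb2 j (Finset.mem_univ j)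
        exact pow_eq_zero_iff two_ne_zero |>.1 this
      have hv0 : ∀ r, v r = 0 := by
        intro r; simp only [hv]
        exact Finset.sum_eq_zero fun j _ => by rw [heb0 j, mul_zero]
      have hP0 : ∑ r, u r * v r = 0 :=
        Finset.sum_eq_zero fun r _ => by rw [hv0 r, mul_zero]
      nlinarith [hlow2, hP0, hSpos, pow_pos hSpos 2]
    · have hBpos : 0 < B := lt_of_le_of_ne hB0 (Ne.symm hB)
      have hP : ∑ r, u r * v r ≤ c * (S * B) := by
        nlinarith [hcross, mul_pos hSpos hBpos]
      rw [div_mul_eq_mul_div, le_div_iff₀ (by linarith : (0:ℝ) < 1 - c)]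
      have key : ((1 - c) * S) * S ≤ (c * B) * S := by
        calc ((1 - c) * S) * S = (1 - c) * S ^ 2 := by ring
          _ ≤ ∑ r, u r * v r := hlow2
          _ ≤ c * (S * B) := hP
          _ = (c * B) * S := by ring
      have h2 := le_of_mul_le_mul_right key hSpos
      linarith
end

section
/- Let x ∈ ℝ^N be K-sparse with support T, and y = Φx + e where Φ satisfies the RIP with constant δ_{3K} < 1. For any index set T̂ with |T̂| ≤ K for which Φ_{T̂} has full column rank, define x̂ by x̂_{T̂} = Φ_{T̂}^† y and x̂ = 0 off T̂. Then ‖x − x̂‖₂ ≤ (1/(1−δ_{3K})) ‖x_{T−T̂}‖₂ + ((1+δ_{3K})/(1−δ_{3K})) ‖e‖₂. -/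
open scoped BigOperators

/-!
Write `x̂` for the least-squares estimate, `h = (x - x̂)` restricted to `T̂` and `z = x_{T - T̂}`,
so that `x - x̂ = h + z`. The residual `y - Φ x̂ = Φ h + Φ z + e` is orthogonal to the columns
of `Φ_{T̂}`, hence `‖Φ h‖² = -⟨Φ h, Φ z⟩ - ⟨Φ h, e⟩`. The RIP bounds the left side below by
`(1 - δ) ‖h‖²`, the first inner product by `δ ‖h‖ ‖z‖` (disjoint supports, polarization) and the
second by `√(1 + δ) ‖h‖ ‖e‖`. Dividing by `‖h‖` and adding `‖z‖` gives the bound.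
-/

open Matrix

section l2norm

variable {ι : Type*} [Fintype ι]

lemma l2norm_eq_norm (v : ι → ℝ) : l2norm v = ‖WithLp.toLp 2 v‖ := by
  simp [l2norm, EuclideanSpace.norm_eq]

lemma l2norm_nonneg (v : ι → ℝ) : 0 ≤ l2norm v := Real.sqrt_nonneg _

lemma l2norm_sq (v : ι → ℝ) : l2norm v ^ 2 = v ⬝ᵥ v := by
  rw [l2norm, Real.sq_sqrt (by positivity)]
  simp only [dotProduct, sq]

lemma l2norm_eq_sqrt_dotProduct (v : ι → ℝ) : l2norm v = √(v ⬝ᵥ v) := by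
  simp only [l2norm, dotProduct, sq]

lemma l2norm_add_le (v w : ι → ℝ) : l2norm (v + w) ≤ l2norm v + l2norm w := by
  simpa only [l2norm_eq_norm, WithLp.toLp_add] using norm_add_le _ _

lemma abs_dotProduct_le_l2norm_mul (v w : ι → ℝ) : |v ⬝ᵥ w| ≤ l2norm v * l2norm w := by
  simpa [l2norm_eq_norm, EuclideanSpace.inner_eq_star_dotProduct, dotProduct_comm v]
    using abs_real_inner_le_norm (WithLp.toLp 2 v) (WithLp.toLp 2 w)

lemma eq_zero_of_l2norm_eq_zero {v : ι → ℝ} (hv : l2norm v = 0) : v = 0 := by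
  rw [l2norm_eq_norm, norm_eq_zero] at hv
  simpa using hv

lemma l2norm_subtype_eq_of_support {s : Finset ι} {v : ι → ℝ} (hv : ∀ j ∉ s, v j = 0) :
    l2norm (fun i : s => v i) = l2norm v := by
  rw [l2norm, l2norm, Finset.sum_coe_sort s (fun j => v j ^ 2)]
  exact congrArg _ (Finset.sum_subset (Finset.subset_univ s) fun j _ hj => by simp [hv j hj])

end l2norm

lemma Matrix.mulVec_dotProduct_sub_leastSquares {m n R : Type*} [Fintype m] [Fintype n]
    [DecidableEq n] [CommRing R] (A : Matrix m n R) (hA : IsUnit (Aᵀ * A)) (q : n → R)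
    (y : m → R) : (A *ᵥ q) ⬝ᵥ (y - A *ᵥ ((Aᵀ * A)⁻¹ *ᵥ (Aᵀ *ᵥ y))) = 0 := by
  have normal_eq : Aᵀ *ᵥ (y - A *ᵥ ((Aᵀ * A)⁻¹ *ᵥ (Aᵀ *ᵥ y))) = 0 := by
    rw [mulVec_sub, mulVec_mulVec, mulVec_mulVec,
      mul_nonsing_inv _ ((isUnit_iff_isUnit_det _).mp hA), one_mulVec, sub_self]
  rw [dotProduct_comm, dotProduct_mulVec, ← mulVec_transpose, normal_eq, zero_dotProduct]

noncomputable def zeroExtend {ι : Type*} [DecidableEq ι] (I : Finset ι) (q : I → ℝ) : ι → ℝ :=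
  fun j => if h : j ∈ I then q ⟨j, h⟩ else 0

@[simp]
lemma zeroExtend_coe {ι : Type*} [DecidableEq ι] {I : Finset ι} (q : I → ℝ) (i : I) :
    zeroExtend I q i = q i :=
  dif_pos i.2

section columns

variable {m N : ℕ} (Φ : Matrix (Fin m) (Fin N) ℝ) {I : Finset (Fin N)}

lemma colMul_of_support {v : Fin N → ℝ} (hv : ∀ j ∉ I, v j = 0) :
    colMul Φ I (fun i => v i) = Φ *ᵥ v := by
  funext r
  rw [colMul, Finset.sum_coe_sort I (fun j => Φ r j * v j)]
  exact Finset.sum_subset (Finset.subset_univ I) fun j _ hj => by simp [hv j hj]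

lemma mulVec_zeroExtend (q : I → ℝ) : Φ *ᵥ zeroExtend I q = colMul Φ I q := by
  rw [← colMul_of_support Φ (v := zeroExtend I q) fun j hj => dif_neg hj]
  simp only [zeroExtend_coe]

lemma mulVec_dotProduct_sub_projVec (hg : IsUnit (gram Φ I)) {v : Fin N → ℝ}
    (hv : ∀ j ∉ I, v j = 0) (y : Fin m → ℝ) : (Φ *ᵥ v) ⬝ᵥ (y - projVec Φ I y) = 0 := by
  rw [← colMul_of_support Φ hv]
  exact (Φ.submatrix id ((↑) : I → Fin N)).mulVec_dotProduct_sub_leastSquares hg _ y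

end columns

lemma Matrix.mulVec_dotProduct_self_le {m n : Type*} [Fintype m] [Fintype n]
    (A : Matrix m n ℝ) (u : n → ℝ) :
    (A *ᵥ u) ⬝ᵥ (A *ᵥ u) ≤ (∑ r, ∑ j, A r j ^ 2) * (u ⬝ᵥ u) := by
  simp only [dotProduct, ← sq]
  rw [Finset.sum_mul]
  exact Finset.sum_le_sum fun r _ => Finset.sum_mul_sq_le_sq_mul_sq Finset.univ (A r) u

namespace IsRIP

variable {m N : ℕ} {Φ : Matrix (Fin m) (Fin N) ℝ} {K : ℕ} {δ : ℝ}

lemma iff_forall_support :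
    IsRIP Φ K δ ↔ ∀ I : Finset (Fin N), I.card ≤ K → ∀ v : Fin N → ℝ, (∀ j ∉ I, v j = 0) →
      (1 - δ) * (v ⬝ᵥ v) ≤ (Φ *ᵥ v) ⬝ᵥ (Φ *ᵥ v) ∧
        (Φ *ᵥ v) ⬝ᵥ (Φ *ᵥ v) ≤ (1 + δ) * (v ⬝ᵥ v) := by
  have sum_sq {I : Finset (Fin N)} {v : Fin N → ℝ} (hv : ∀ j ∉ I, v j = 0) :
      ∑ i : I, v i ^ 2 = v ⬝ᵥ v := by
    rw [Finset.sum_coe_sort I (fun j => v j ^ 2)]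
    simp only [dotProduct, ← sq]
    exact Finset.sum_subset (Finset.subset_univ I) fun j _ hj => by simp [hv j hj]
  have sum_sq_mulVec (u : Fin m → ℝ) : ∑ r, u r ^ 2 = u ⬝ᵥ u := by simp only [dotProduct, sq]
  constructor
  · intro hR I hI v hv
    simpa only [colMul_of_support Φ hv, sum_sq hv, sum_sq_mulVec] using hR I hI fun i => v i
  · intro hR I hI q
    have hq : ∀ j ∉ I, zeroExtend I q j = 0 := fun j hj => dif_neg hj
    have := hR I hI _ hq
    simpa only [← sum_sq hq, mulVec_zeroExtend, ← sum_sq_mulVec, zeroExtend_coe] using this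

end IsRIP


namespace IsRIP

variable {m N : ℕ} {Φ : Matrix (Fin m) (Fin N) ℝ} {K : ℕ} {δ : ℝ} {I J : Finset (Fin N)}

lemma abs_dotProduct_mulVec_le (hR : IsRIP Φ K δ) (hIJ : Disjoint I J)
    (hcard : I.card + J.card ≤ K) {v w : Fin N → ℝ} (hv : ∀ j ∉ I, v j = 0)
    (hw : ∀ j ∉ J, w j = 0) :
    |(Φ *ᵥ v) ⬝ᵥ (Φ *ᵥ w)| ≤ δ * l2norm v * l2norm w := by
  have hvw : v ⬝ᵥ w = 0 := Finset.sum_eq_zero fun j _ => by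
    by_cases hj : j ∈ I
    · simp [hw j (Finset.disjoint_left.1 hIJ hj)]
    · simp [hv j hj]
  have hsupp (s t : ℝ) : ∀ j ∉ I ∪ J, (s • v + t • w) j = 0 := by
    intro j hj
    rw [Finset.mem_union, not_or] at hj
    simp [hv j hj.1, hw j hj.2]
  have rip (s t : ℝ) := iff_forall_support.1 hR _ ((Finset.card_union_le I J).trans hcard) _
    (hsupp s t)
  have norm_combo (s t : ℝ) : (s • v + t • w) ⬝ᵥ (s • v + t • w) =
      s ^ 2 * l2norm v ^ 2 + t ^ 2 * l2norm w ^ 2 := by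
    simp only [add_dotProduct, dotProduct_add, smul_dotProduct, dotProduct_smul, smul_eq_mul,
      l2norm_sq, hvw, dotProduct_comm w v]
    ring
  have image_combo (s t : ℝ) : (Φ *ᵥ (s • v + t • w)) ⬝ᵥ (Φ *ᵥ (s • v + t • w)) =
      s ^ 2 * ((Φ *ᵥ v) ⬝ᵥ (Φ *ᵥ v)) + 2 * s * t * ((Φ *ᵥ v) ⬝ᵥ (Φ *ᵥ w)) +
        t ^ 2 * ((Φ *ᵥ w) ⬝ᵥ (Φ *ᵥ w)) := by
    simp only [mulVec_add, mulVec_smul, add_dotProduct, dotProduct_add, smul_dotProduct,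
      dotProduct_smul, smul_eq_mul, dotProduct_comm (Φ *ᵥ w) (Φ *ᵥ v)]
    ring
  -- polarization with `‖w‖ • v ± ‖v‖ • w`, both of squared norm `2 ‖v‖² ‖w‖²`
  have polar : |l2norm v * l2norm w * ((Φ *ᵥ v) ⬝ᵥ (Φ *ᵥ w))| ≤
      δ * (l2norm v * l2norm w) ^ 2 := by
    obtain ⟨lower₁, upper₁⟩ := rip (l2norm w) (l2norm v)
    obtain ⟨lower₂, upper₂⟩ := rip (l2norm w) (-l2norm v)
    rw [norm_combo, image_combo] at lower₁ upper₁ lower₂ upper₂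
    exact abs_le.2 ⟨by nlinarith, by nlinarith⟩
  rcases (mul_nonneg (l2norm_nonneg v) (l2norm_nonneg w)).eq_or_lt with hab | hab
  · rcases mul_eq_zero.1 hab.symm with h | h <;> rw [h, eq_zero_of_l2norm_eq_zero h] <;> simp
  · rw [abs_mul, abs_of_pos hab] at polar
    refine le_of_mul_le_mul_left ?_ hab
    linarith

lemma mul_l2norm_le_of_dotProduct_eq_zero (hR : IsRIP Φ K δ) (hδ : 0 ≤ δ) (hIJ : Disjoint I J)
    (hcard : I.card + J.card ≤ K) {h z : Fin N → ℝ} (e : Fin m → ℝ) (hh : ∀ j ∉ I, h j = 0)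
    (hz : ∀ j ∉ J, z j = 0) (horth : (Φ *ᵥ h) ⬝ᵥ (Φ *ᵥ h + Φ *ᵥ z + e) = 0) :
    (1 - δ) * l2norm h ≤ δ * l2norm z + √(1 + δ) * l2norm e := by
  obtain ⟨lower, upper⟩ := iff_forall_support.1 hR I (by omega) h hh
  have cross := hR.abs_dotProduct_mulVec_le hIJ hcard hh hz
  have image_le : l2norm (Φ *ᵥ h) ≤ √(1 + δ) * l2norm h := by
    rw [l2norm_eq_sqrt_dotProduct, l2norm_eq_sqrt_dotProduct, ← Real.sqrt_mul (by linarith)]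
    exact Real.sqrt_le_sqrt upper
  have noise : |(Φ *ᵥ h) ⬝ᵥ e| ≤ √(1 + δ) * l2norm h * l2norm e :=
    (abs_dotProduct_le_l2norm_mul _ _).trans
      (mul_le_mul_of_nonneg_right image_le (l2norm_nonneg e))
  have energy : (1 - δ) * l2norm h ^ 2 ≤
      l2norm h * (δ * l2norm z + √(1 + δ) * l2norm e) := by
    rw [dotProduct_add, dotProduct_add] at horth
    rw [l2norm_sq]
    linarith [neg_abs_le ((Φ *ᵥ h) ⬝ᵥ (Φ *ᵥ z)), neg_abs_le ((Φ *ᵥ h) ⬝ᵥ e)]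
  rcases (l2norm_nonneg h).eq_or_lt with hzero | hpos
  · rw [← hzero, mul_zero]
    exact add_nonneg (mul_nonneg hδ (l2norm_nonneg z))
      (mul_nonneg (Real.sqrt_nonneg _) (l2norm_nonneg e))
  · exact le_of_mul_le_mul_left (by linarith) hpos

end IsRIP

section ripConst

variable {m N : ℕ} (Φ : Matrix (Fin m) (Fin N) ℝ) (K : ℕ)

lemma isRIP_one_add_sum_sq : IsRIP Φ K (1 + ∑ r, ∑ j, Φ r j ^ 2) := by
  refine IsRIP.iff_forall_support.2 fun I _ v _ => ⟨?_, ?_⟩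
  · have hF : 0 ≤ ∑ r, ∑ j, Φ r j ^ 2 := by positivity
    nlinarith [l2norm_sq v, l2norm_sq (Φ *ᵥ v)]
  · nlinarith [l2norm_sq v, Φ.mulVec_dotProduct_self_le v]

lemma isClosed_setOf_isRIP : IsClosed {δ : ℝ | IsRIP Φ K δ} := by
  simp only [IsRIP, Set.ofPred_forall, Set.ofPred_and]
  refine isClosed_iInter fun I => isClosed_iInter fun _ => isClosed_iInter fun q => ?_
  exact (isClosed_le (by fun_prop) continuous_const).inter
    (isClosed_le continuous_const (by fun_prop))

lemma ripConst_mem : ripConst Φ K ∈ {δ : ℝ | 0 ≤ δ ∧ IsRIP Φ K δ} :=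
  (isClosed_Ici.inter (isClosed_setOf_isRIP Φ K)).csInf_mem
    ⟨_, Set.mem_Ici.2 (by positivity), isRIP_one_add_sum_sq Φ K⟩ ⟨0, fun _ h => h.1⟩

end ripConst

theorem recovery_error_bound {m N : ℕ} (Φ : Matrix (Fin m) (Fin N) ℝ) (K : ℕ)
    (x : Fin N → ℝ) (e : Fin m → ℝ) (T That : Finset (Fin N))
    (hsupp : ∀ i, i ∉ T → x i = 0) (hT : T.card ≤ K)
    (hThat : That.card ≤ K) (hg : IsUnit (gram Φ That))
    (hδ : ripConst Φ (3 * K) < 1) :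
    l2norm (fun i => x i -
        (if h : i ∈ That then projCoeff Φ That (Φ.mulVec x + e) ⟨i, h⟩ else 0)) ≤
      1 / (1 - ripConst Φ (3 * K)) *
          l2norm (fun i : (T \ That : Finset (Fin N)) => x i.1) +
        (1 + ripConst Φ (3 * K)) / (1 - ripConst Φ (3 * K)) * l2norm e := by
  obtain ⟨hδ0, hR⟩ := ripConst_mem Φ (3 * K)
  set δ := ripConst Φ (3 * K)
  set xhat := zeroExtend That (projCoeff Φ That (Φ *ᵥ x + e))
  set z : Fin N → ℝ := fun j => if j ∈ That then 0 else x j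
  set h := x - xhat - z
  have hh : ∀ j ∉ That, h j = 0 := fun j hj => by simp [h, z, xhat, hj, zeroExtend]
  have hz : ∀ j ∉ T \ That, z j = 0 := fun j hj => by
    by_cases hjT : j ∈ That <;> simp_all [z]
  have horth : (Φ *ᵥ h) ⬝ᵥ (Φ *ᵥ h + Φ *ᵥ z + e) = 0 := by
    have residual : Φ *ᵥ h + Φ *ᵥ z + e = (Φ *ᵥ x + e) - projVec Φ That (Φ *ᵥ x + e) := by
      rw [projVec, ← mulVec_zeroExtend, ← mulVec_add, sub_add_cancel, mulVec_sub]
      abel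
    rw [residual]
    exact mulVec_dotProduct_sub_projVec Φ hg hh _
  have hcard : That.card + (T \ That).card ≤ 3 * K := by
    grind [Finset.card_le_card (Finset.sdiff_subset (s := T) (t := That))]
  have hbound := hR.mul_l2norm_le_of_dotProduct_eq_zero hδ0 Finset.disjoint_sdiff hcard e hh hz
    horth
  have hzx : l2norm (fun i : (T \ That : Finset (Fin N)) => x i.1) = l2norm z := by
    rw [← l2norm_subtype_eq_of_support hz]
    exact congrArg l2norm (funext fun i => (if_neg (Finset.mem_sdiff.1 i.2).2).symm)
  have hsqrt : √(1 + δ) ≤ 1 + δ := Real.sqrt_le_self_iff.2 (Or.inr (by linarith))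
  rw [hzx]
  calc l2norm (x - xhat) = l2norm (h + z) := by rw [sub_add_cancel]
    _ ≤ l2norm h + l2norm z := l2norm_add_le h z
    _ ≤ 1 / (1 - δ) * l2norm z + (1 + δ) / (1 - δ) * l2norm e := by
      rw [div_mul_eq_mul_div, div_mul_eq_mul_div, ← add_div, le_div_iff₀ (by linarith)]
      nlinarith [l2norm_nonneg e]
end
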